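/- Let ω be a nonzero Radon measure on ℝⁿ with support F := spt ω, and let p ∈ F. Assume: (a) for every ν ∈ Tan(ω,p), every x ∈ spt ν and every r > 0, T_{x,r}[ν] ∈ Tan(ω,p); and (b) for every sequence ρ_i ↓ 0 there exist a subsequence ρ_{i_k}, constants c_k > 0 and a nonzero Radon measure ν ∈ Tan(ω,p) such that c_k T_{p,ρ_{i_k}}[ω] → ν in the weak-* sense and (F−p)/ρ_{i_k} → spt ν locally Hausdorff. Then for every Σ ∈ Tan(F,p), every x ∈ Σ and every r > 0, one has (Σ − x)/r ∈ Tan(F,p). -/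

import Mathlib

open MeasureTheory Metric Filter Topology Set

/-- The pushforward of `μ` under `T_{a,r}(x) = (x - a)/r`. -/
noncomputable def blowup {n : ℕ} (μ : Measure (EuclideanSpace ℝ (Fin n)))
    (a : EuclideanSpace ℝ (Fin n)) (r : ℝ) : Measure (EuclideanSpace ℝ (Fin n)) :=
  Measure.map (fun x => r⁻¹ • (x - a)) μ

/-- Weak-* convergence of a sequence of measures on `ℝⁿ`. -/
def WeakStarTendsto {n : ℕ} (μ : ℕ → Measure (EuclideanSpace ℝ (Fin n)))
    (ν : Measure (EuclideanSpace ℝ (Fin n))) : Prop :=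
  ∀ f : EuclideanSpace ℝ (Fin n) → ℝ, Continuous f → HasCompactSupport f →
    Tendsto (fun i => ∫ x, f x ∂(μ i)) atTop (𝓝 (∫ x, f x ∂ν))

/-- The tangent measures of `μ` at `a`: nonzero Radon measures `ν` which are weak-* limits
of `c_i T_{a,r_i}[μ]` for some `c_i > 0` and `r_i ↓ 0`. -/
def TanM {n : ℕ} (μ : Measure (EuclideanSpace ℝ (Fin n))) (a : EuclideanSpace ℝ (Fin n)) :
    Set (Measure (EuclideanSpace ℝ (Fin n))) :=
  {ν | ν ≠ 0 ∧ IsLocallyFiniteMeasure ν ∧ ∃ c r : ℕ → ℝ,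
    (∀ i, 0 < c i) ∧ (∀ i, 0 < r i) ∧ Tendsto r atTop (𝓝 0) ∧
    WeakStarTendsto (fun i => ENNReal.ofReal (c i) • blowup μ a (r i)) ν}

/-- The support of a measure: the set of points all of whose balls have positive measure. -/
def sptSet {n : ℕ} (ν : Measure (EuclideanSpace ℝ (Fin n))) : Set (EuclideanSpace ℝ (Fin n)) :=
  {x | ∀ ρ : ℝ, 0 < ρ → 0 < ν (ball x ρ)}

/-- `τ_r(K,S) = (1/r)·dist_H[K ∩ B̄_r, S ∩ B̄_r]`, the normalized Hausdorff distance at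
scale `r` between two closed sets. -/
noncomputable def tauDist {n : ℕ} (r : ℝ) (K S : Set (EuclideanSpace ℝ (Fin n))) : ℝ :=
  r⁻¹ * Metric.hausdorffDist (K ∩ closedBall 0 r) (S ∩ closedBall 0 r)

/-- Local Hausdorff convergence of a sequence of closed sets: `τ_r(F_i, S) → 0` for every
`r > 0`. -/
def LocHausTendsto {n : ℕ} (F : ℕ → Set (EuclideanSpace ℝ (Fin n)))
    (S : Set (EuclideanSpace ℝ (Fin n))) : Prop :=
  ∀ r : ℝ, 0 < r → Tendsto (fun i => tauDist r (F i) S) atTop (𝓝 0)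

/-- The set-theoretic tangents of a closed set `F` at `p`: nonempty closed sets `S` which are
local Hausdorff limits of `(F − p)/r_i` for some `r_i ↓ 0`. -/
def TanSet {n : ℕ} (F : Set (EuclideanSpace ℝ (Fin n))) (p : EuclideanSpace ℝ (Fin n)) :
    Set (Set (EuclideanSpace ℝ (Fin n))) :=
  {S | S.Nonempty ∧ IsClosed S ∧ ∃ r : ℕ → ℝ, (∀ i, 0 < r i) ∧ Tendsto r atTop (𝓝 0) ∧
    LocHausTendsto (fun i => (fun x => (r i)⁻¹ • (x - p)) '' F) S}


/-!
A local Hausdorff limit of sets containing the origin is unique among nonempty closed sets, so by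
(b) every `Σ ∈ Tan(F,p)` is the support of a tangent measure `ν`, and then `(Σ − x)/r` is the
support of `T_{x,r}[ν]`, a tangent measure by (a). It remains to see that the support of every
tangent measure `μ` lies in `Tan(F,p)`. Applying (b) to the scales that define `μ` produces a
tangent measure `ν` which is a weak-* limit of the same blow-ups of `ω` with other normalizations
and whose support is the local Hausdorff limit of the blown-up supports. Two nonzero weak-* limits
of `a_k m_k` and `b_k m_k` are proportional, since a regular measure is determined by its integrals
against `C_c`, so `spt μ = spt ν ∈ Tan(F,p)`.
-/

open scoped CompactlySupported NNReal

theorem MeasureTheory.Measure.support_map_homeomorph {X Y : Type*} [TopologicalSpace X]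
    [MeasurableSpace X] [BorelSpace X] [TopologicalSpace Y] [MeasurableSpace Y] [BorelSpace Y]
    (h : X ≃ₜ Y) (μ : Measure X) : (μ.map h).support = h '' μ.support := by
  ext y
  have hbasis : (𝓝 (h.symm y)).HasBasis (· ∈ 𝓝 y) (h ⁻¹' ·) :=
    h.comap_nhds_eq y ▸ (𝓝 y).basis_sets.comap h
  rw [h.image_eq_preimage_symm, mem_preimage, hbasis.mem_measureSupport,
    (𝓝 y).basis_sets.mem_measureSupport, ← h.toMeasurableEquiv_coe]
  simp only [id, MeasurableEquiv.map_apply]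

theorem MeasureTheory.Measure.exists_integral_ne_zero {X : Type*} [TopologicalSpace X]
    [T2Space X] [LocallyCompactSpace X] [MeasurableSpace X] [BorelSpace X] {μ : Measure X}
    [μ.Regular] (hμ : μ ≠ 0) : ∃ f : C_c(X, ℝ≥0), ∫ x, (f x : ℝ) ∂μ ≠ 0 := by
  by_contra! h
  exact hμ (Measure.ext_of_integral_eq_on_compactlySupported_nnreal fun f => by simp [h f])

section

variable {n : ℕ}

local notation "E" => EuclideanSpace ℝ (Fin n)

theorem sptSet_eq_support (ν : Measure E) : sptSet ν = ν.support := by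
  ext x
  exact nhds_basis_ball.mem_measureSupport.symm

theorem isClosed_sptSet (ν : Measure E) : IsClosed (sptSet ν) :=
  sptSet_eq_support ν ▸ Measure.isClosed_support

theorem sptSet_nonempty {ν : Measure E} (hν : ν ≠ 0) : (sptSet ν).Nonempty :=
  sptSet_eq_support ν ▸ Measure.nonempty_support hν

theorem sptSet_smul (ν : Measure E) {c : ENNReal} (hc : c ≠ 0) : sptSet (c • ν) = sptSet ν := by
  ext x
  simp [sptSet, pos_iff_ne_zero, hc]

theorem sptSet_blowup (ν : Measure E) (x : E) {r : ℝ} (hr : r ≠ 0) :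
    sptSet (blowup ν x r) = (fun y => r⁻¹ • (y - x)) '' sptSet ν := by
  rw [sptSet_eq_support, sptSet_eq_support]
  exact Measure.support_map_homeomorph
    ((Homeomorph.subRight x).trans (Homeomorph.smulOfNeZero r⁻¹ (inv_ne_zero hr))) ν

theorem WeakStarTendsto.comp_strictMono {μ : ℕ → Measure E} {ν : Measure E}
    (h : WeakStarTendsto μ ν) {φ : ℕ → ℕ} (hφ : StrictMono φ) : WeakStarTendsto (μ ∘ φ) ν :=
  fun f hf hfs => (h f hf hfs).comp hφ.tendsto_atTop

theorem LocHausTendsto.comp_strictMono {F : ℕ → Set E} {S : Set E} (h : LocHausTendsto F S)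
    {φ : ℕ → ℕ} (hφ : StrictMono φ) : LocHausTendsto (F ∘ φ) S :=
  fun r hr => (h r hr).comp hφ.tendsto_atTop

theorem exists_eq_ofReal_smul_of_weakStarTendsto {m : ℕ → Measure E} {a b : ℕ → ℝ}
    (ha : ∀ k, 0 ≤ a k) (hb : ∀ k, 0 ≤ b k) {μ ν : Measure E} [IsLocallyFiniteMeasure μ]
    [IsLocallyFiniteMeasure ν] (hμ0 : μ ≠ 0)
    (hμ : WeakStarTendsto (fun k => ENNReal.ofReal (a k) • m k) μ)
    (hν : WeakStarTendsto (fun k => ENNReal.ofReal (b k) • m k) ν) :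
    ∃ t : ℝ, ν = ENNReal.ofReal t • μ := by
  obtain ⟨f, hf⟩ := Measure.exists_integral_ne_zero hμ0
  have hf_cont : Continuous fun x => (f x : ℝ) := by fun_prop
  have hf_supp : HasCompactSupport fun x => (f x : ℝ) := f.hasCompactSupport.comp_left rfl
  have hscale : ∀ c : ℕ → ℝ, (∀ k, 0 ≤ c k) → ∀ (g : E → ℝ) k,
      ∫ x, g x ∂(ENNReal.ofReal (c k) • m k) = c k * ∫ x, g x ∂(m k) := fun c hc g k => by
    rw [integral_smul_measure, ENNReal.toReal_ofReal (hc k), smul_eq_mul]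
  have hcross : ∀ g : C_c(E, ℝ),
      (∫ x, g x ∂ν) * ∫ x, (f x : ℝ) ∂μ = (∫ x, g x ∂μ) * ∫ x, (f x : ℝ) ∂ν := fun g => by
    refine tendsto_nhds_unique ((hν g g.continuous g.hasCompactSupport).mul
      (hμ _ hf_cont hf_supp)) (((hμ g g.continuous g.hasCompactSupport).mul
      (hν _ hf_cont hf_supp)).congr fun k => ?_)
    simp only [hscale a ha, hscale b hb]
    ring
  set t := (∫ x, (f x : ℝ) ∂ν) / ∫ x, (f x : ℝ) ∂μ
  have ht : 0 ≤ t :=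
    div_nonneg (integral_nonneg fun x => (f x).2) (integral_nonneg fun x => (f x).2)
  have := Measure.Regular.smul (μ := μ) (ENNReal.ofReal_ne_top (r := t))
  refine ⟨t, Measure.ext_of_integral_eq_on_compactlySupported fun g => ?_⟩
  rw [integral_smul_measure, ENNReal.toReal_ofReal ht, smul_eq_mul, div_mul_eq_mul_div,
    eq_div_iff hf, hcross g]
  ring

theorem sptSet_eq_of_weakStarTendsto {m : ℕ → Measure E} {a b : ℕ → ℝ}
    (ha : ∀ k, 0 ≤ a k) (hb : ∀ k, 0 ≤ b k) {μ ν : Measure E} [IsLocallyFiniteMeasure μ]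
    [IsLocallyFiniteMeasure ν] (hμ0 : μ ≠ 0) (hν0 : ν ≠ 0)
    (hμ : WeakStarTendsto (fun k => ENNReal.ofReal (a k) • m k) μ)
    (hν : WeakStarTendsto (fun k => ENNReal.ofReal (b k) • m k) ν) :
    sptSet μ = sptSet ν := by
  obtain ⟨t, rfl⟩ := exists_eq_ofReal_smul_of_weakStarTendsto ha hb hμ0 hμ hν
  exact (sptSet_smul μ fun ht => hν0 (by rw [ht, zero_smul])).symm

theorem infDist_le_mul_tauDist_add {F S T : Set E} (hF : (0 : E) ∈ F) {R : ℝ} (hR : 0 < R)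
    (hT : (T ∩ closedBall 0 R).Nonempty) {z : E} (hz : z ∈ S ∩ closedBall 0 R) :
    infDist z T ≤ R * (tauDist R F S + tauDist R F T) := by
  have hfin : ∀ {U V : Set E}, U.Nonempty → V.Nonempty → U ⊆ closedBall 0 R →
      V ⊆ closedBall 0 R → hausdorffEDist U V ≠ ⊤ := fun hU hV hUR hVR =>
    hausdorffEDist_ne_top_of_nonempty_of_bounded hU hV (isBounded_closedBall.subset hUR)
      (isBounded_closedBall.subset hVR)
  have hFR : (F ∩ closedBall 0 R).Nonempty := ⟨0, hF, mem_closedBall_self hR.le⟩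
  calc infDist z T ≤ infDist z (T ∩ closedBall 0 R) :=
        infDist_le_infDist_of_subset inter_subset_left hT
    _ ≤ infDist z (S ∩ closedBall 0 R) + hausdorffDist (S ∩ closedBall 0 R) (T ∩ closedBall 0 R) :=
      infDist_le_infDist_add_hausdorffDist (hfin ⟨z, hz⟩ hT inter_subset_right inter_subset_right)
    _ = hausdorffDist (S ∩ closedBall 0 R) (T ∩ closedBall 0 R) := by
      rw [infDist_zero_of_mem hz, zero_add]
    _ ≤ hausdorffDist (S ∩ closedBall 0 R) (F ∩ closedBall 0 R)
        + hausdorffDist (F ∩ closedBall 0 R) (T ∩ closedBall 0 R) :=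
      hausdorffDist_triangle (hfin ⟨z, hz⟩ hFR inter_subset_right inter_subset_right)
    _ = R * (tauDist R F S + tauDist R F T) := by
      rw [hausdorffDist_comm, tauDist, tauDist, ← mul_add, mul_inv_cancel_left₀ hR.ne']

theorem LocHausTendsto.subset {F : ℕ → Set E} {S T : Set E} (hS : LocHausTendsto F S)
    (hT : LocHausTendsto F T) (hF : ∀ i, (0 : E) ∈ F i) (hTc : IsClosed T) (hTne : T.Nonempty) :
    S ⊆ T := by
  intro z hz
  obtain ⟨w, hw⟩ := hTne
  set R := max ‖z‖ ‖w‖ + 1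
  have hR : 0 < R := by positivity
  have hball : ∀ y : E, ‖y‖ ≤ max ‖z‖ ‖w‖ → y ∈ closedBall 0 R := fun y hy =>
    mem_closedBall_zero_iff.2 (by linarith)
  have hbound : ∀ i, infDist z T ≤ R * (tauDist R (F i) S + tauDist R (F i) T) := fun i =>
    infDist_le_mul_tauDist_add (hF i) hR ⟨w, hw, hball w (le_max_right _ _)⟩
      ⟨hz, hball z (le_max_left _ _)⟩
  have hlim : Tendsto (fun i => R * (tauDist R (F i) S + tauDist R (F i) T)) atTop (𝓝 0) := by
    simpa using ((hS R hR).add (hT R hR)).const_mul R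
  rw [← hTc.closure_eq, mem_closure_iff_infDist_zero ⟨w, hw⟩]
  exact le_antisymm (ge_of_tendsto' hlim hbound) infDist_nonneg

theorem LocHausTendsto.unique {F : ℕ → Set E} {S T : Set E} (hS : LocHausTendsto F S)
    (hT : LocHausTendsto F T) (hF : ∀ i, (0 : E) ∈ F i) (hSc : IsClosed S) (hSne : S.Nonempty)
    (hTc : IsClosed T) (hTne : T.Nonempty) : S = T :=
  (hS.subset hT hF hTc hTne).antisymm (hT.subset hS hF hSc hSne)

/-- Hypothesis (b). -/
def BlowupsSubconvergeWithSupports (ω : Measure E) (p : E) : Prop :=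
  ∀ ρ : ℕ → ℝ, (∀ i, 0 < ρ i) → Tendsto ρ atTop (𝓝 0) →
    ∃ φ : ℕ → ℕ, StrictMono φ ∧ ∃ c : ℕ → ℝ, (∀ k, 0 < c k) ∧ ∃ ν ∈ TanM ω p,
      WeakStarTendsto (fun k => ENNReal.ofReal (c k) • blowup ω p (ρ (φ k))) ν ∧
      LocHausTendsto (fun k => (fun x => (ρ (φ k))⁻¹ • (x - p)) '' sptSet ω) (sptSet ν)

theorem exists_mem_tanM_sptSet_eq {ω : Measure E} {p : E} (hb : BlowupsSubconvergeWithSupports ω p)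
    (hp : p ∈ sptSet ω) {S : Set E} (hS : S ∈ TanSet (sptSet ω) p) :
    ∃ ν ∈ TanM ω p, sptSet ν = S := by
  obtain ⟨hSne, hSc, ρ, hρ, hρ0, hSlim⟩ := hS
  obtain ⟨φ, hφ, -, -, ν, hν, -, hνlim⟩ := hb ρ hρ hρ0
  exact ⟨ν, hν, hνlim.unique (hSlim.comp_strictMono hφ) (fun k => ⟨p, hp, by simp⟩)
    (isClosed_sptSet ν) (sptSet_nonempty hν.1) hSc hSne⟩

theorem sptSet_mem_tanSet_of_mem_tanM {ω : Measure E} {p : E}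
    (hb : BlowupsSubconvergeWithSupports ω p) {μ : Measure E} (hμ : μ ∈ TanM ω p) :
    sptSet μ ∈ TanSet (sptSet ω) p := by
  obtain ⟨hμ0, hμ_lf, c, r, hc, hr, hr0, hμlim⟩ := hμ
  obtain ⟨φ, hφ, c', hc', ν, ⟨hν0, hν_lf, -⟩, hνlim, hνspt⟩ := hb r hr hr0
  rw [sptSet_eq_of_weakStarTendsto (fun k => (hc (φ k)).le) (fun k => (hc' k).le) hμ0 hν0
    (hμlim.comp_strictMono hφ) hνlim]
  exact ⟨sptSet_nonempty hν0, isClosed_sptSet ν, r ∘ φ, fun k => hr (φ k),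
    hr0.comp hφ.tendsto_atTop, hνspt⟩

end

theorem tangents_to_tangents_sets_general {n : ℕ}
    (ω : Measure (EuclideanSpace ℝ (Fin n)))
    (p : EuclideanSpace ℝ (Fin n)) (hp : p ∈ sptSet ω)
    (ha : ∀ ν ∈ TanM ω p, ∀ x ∈ sptSet ν, ∀ r : ℝ, 0 < r → blowup ν x r ∈ TanM ω p)
    (hb : ∀ ρ : ℕ → ℝ, (∀ i, 0 < ρ i) → Tendsto ρ atTop (𝓝 0) →
      ∃ φ : ℕ → ℕ, StrictMono φ ∧ ∃ c : ℕ → ℝ, (∀ k, 0 < c k) ∧ ∃ ν ∈ TanM ω p,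
        WeakStarTendsto (fun k => ENNReal.ofReal (c k) • blowup ω p (ρ (φ k))) ν ∧
        LocHausTendsto (fun k => (fun x => (ρ (φ k))⁻¹ • (x - p)) '' sptSet ω) (sptSet ν)) :
    ∀ S ∈ TanSet (sptSet ω) p, ∀ x ∈ S, ∀ r : ℝ, 0 < r →
      (fun y => r⁻¹ • (y - x)) '' S ∈ TanSet (sptSet ω) p := by
  rintro S hS x hx r hr
  obtain ⟨ν, hν, rfl⟩ := exists_mem_tanM_sptSet_eq hb hp hS
  rw [← sptSet_blowup ν x hr.ne']
  exact sptSet_mem_tanSet_of_mem_tanM hb (ha ν hν x hx r hr)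

/-- Tangents to tangents are tangents, set-theoretic version: if (a) tangent measures of `ω`
at `p` are invariant under the blow-ups `T_{x,r}` at points of their supports, and (b) every
sequence of scales admits a subsequence along which the normalized blow-ups of `ω` converge
weak-* to a tangent measure `ν` while `(F − p)/ρ_{i_k} → spt ν` locally Hausdorff, then for
every `Σ ∈ Tan(F,p)`, `x ∈ Σ` and `r > 0` one has `(Σ − x)/r ∈ Tan(F,p)`, where `F = spt ω`. -/
theorem tangents_to_tangents_sets {n : ℕ}
    (ω : Measure (EuclideanSpace ℝ (Fin n))) [IsLocallyFiniteMeasure ω] (hω : ω ≠ 0)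
    (p : EuclideanSpace ℝ (Fin n)) (hp : p ∈ sptSet ω)
    (ha : ∀ ν ∈ TanM ω p, ∀ x ∈ sptSet ν, ∀ r : ℝ, 0 < r → blowup ν x r ∈ TanM ω p)
    (hb : ∀ ρ : ℕ → ℝ, (∀ i, 0 < ρ i) → Tendsto ρ atTop (𝓝 0) →
      ∃ φ : ℕ → ℕ, StrictMono φ ∧ ∃ c : ℕ → ℝ, (∀ k, 0 < c k) ∧ ∃ ν ∈ TanM ω p,
        WeakStarTendsto (fun k => ENNReal.ofReal (c k) • blowup ω p (ρ (φ k))) ν ∧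
        LocHausTendsto (fun k => (fun x => (ρ (φ k))⁻¹ • (x - p)) '' sptSet ω) (sptSet ν)) :
    ∀ S ∈ TanSet (sptSet ω) p, ∀ x ∈ S, ∀ r : ℝ, 0 < r →
      (fun y => r⁻¹ • (y - x)) '' S ∈ TanSet (sptSet ω) p :=
  tangents_to_tangents_sets_general ω p hp ha hb
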